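/- arXiv:1911.10126 — 3 statements merged into one kernel-verified Lean document; each statement's English description precedes it below -/
import Mathlib

section
/- Let s ≥ 2 be an even integer. Then there exist polynomials H and G in ℂ[x,y,z], each homogeneous of degree s, such that x^{2s} − y^{2s} − z^{2s} = (x^s − y^s − z^s)·H + G^2. -/
open MvPolynomial

/-- Let `s ≥ 2` be an even integer. Then there exist polynomials `H` and `G` in
`ℂ[x,y,z]`, each homogeneous of degree `s`, such that
`x^{2s} − y^{2s} − z^{2s} = (x^s − y^s − z^s)·H + G^2`. -/
theorem fermat_double_tangent (s : ℕ) (hs : 2 ≤ s) (heven : Even s) :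
    ∃ H G : MvPolynomial (Fin 3) ℂ,
      H.IsHomogeneous s ∧ G.IsHomogeneous s ∧
      X 0 ^ (2 * s) - X 1 ^ (2 * s) - X 2 ^ (2 * s)
        = (X 0 ^ s - X 1 ^ s - X 2 ^ s) * H + G ^ 2 := by
  obtain ⟨k, hk⟩ := heven
  subst hk
  refine ⟨X 0 ^ (k + k) + X 1 ^ (k + k) + X 2 ^ (k + k),
    C (Real.sqrt 2 : ℂ) * (X 1 * X 2) ^ k, ?_, ?_, ?_⟩
  · exact ((isHomogeneous_X_pow _ _).add (isHomogeneous_X_pow _ _)).add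
      (isHomogeneous_X_pow _ _)
  · have := (((isHomogeneous_X ℂ (1 : Fin 3)).mul (isHomogeneous_X ℂ 2)).pow k).C_mul
      ((Real.sqrt 2 : ℝ) : ℂ)
    simpa [two_mul] using this
  · have hc : (C ((Real.sqrt 2 : ℝ) : ℂ) : MvPolynomial (Fin 3) ℂ) ^ 2 = 2 := by
      rw [← map_pow]
      norm_cast
      rw [Real.sq_sqrt (by norm_num)]
      simp [map_ofNat]
    rw [mul_pow, hc]
    ring
end

section
/- Let l ≥ 1 be an integer. In the formal power series ring ℂ[[u,v]], let I be the ideal generated by u − v^l and u + v^l. Then the quotient ring ℂ[[u,v]]/I is a finite-dimensional ℂ-vector space of dimension exactly l. -/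
open MvPowerSeries

open Finsupp in
/-- Division lemma: if all coefficients of `f` at monomials `v^j`, `j < l`, vanish,
then `f ∈ (u, v^l)`. -/
lemma mem_span_of_coeff_eq_zero (l : ℕ) (f : MvPowerSeries (Fin 2) ℂ)
    (hf : ∀ j : Fin l, coeff (Finsupp.single 1 (j : ℕ)) f = 0) :
    f ∈ Ideal.span ({X 0, X 1 ^ l} : Set (MvPowerSeries (Fin 2) ℂ)) := by
  classical
  rw [Ideal.mem_span_pair]
  set g : MvPowerSeries (Fin 2) ℂ := fun d => coeff (d + Finsupp.single 0 1) f with hg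
  set h : MvPowerSeries (Fin 2) ℂ :=
    fun d => if d 0 = 0 then coeff (d + Finsupp.single 1 l) f else 0 with hh
  refine ⟨g, h, ?_⟩
  ext d
  have hX0 : (X 0 : MvPowerSeries (Fin 2) ℂ) = monomial (Finsupp.single 0 1) 1 := by
    rw [← pow_one (X 0 : MvPowerSeries (Fin 2) ℂ), X_pow_eq]
  have hX1 : (X 1 : MvPowerSeries (Fin 2) ℂ) ^ l = monomial (Finsupp.single 1 l) 1 :=
    X_pow_eq 1 l
  rw [map_add, mul_comm g, mul_comm h, hX0, hX1, coeff_monomial_mul, coeff_monomial_mul]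
  by_cases hd0 : d 0 = 0
  · have h1 : ¬ Finsupp.single (0 : Fin 2) 1 ≤ d := by
      rw [Finsupp.single_le_iff, hd0]; omega
    rw [if_neg h1]
    by_cases hd1 : l ≤ d 1
    · have h2 : Finsupp.single (1 : Fin 2) l ≤ d := by rw [Finsupp.single_le_iff]; exact hd1
      rw [if_pos h2]
      have hsub0 : (d - Finsupp.single (1 : Fin 2) l) 0 = 0 := by
        rw [Finsupp.tsub_apply, Finsupp.single_apply]
        simp [hd0]
      have : coeff (d - Finsupp.single (1 : Fin 2) l) h
          = coeff ((d - Finsupp.single (1 : Fin 2) l) + Finsupp.single 1 l) f := by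
        have hrfl : coeff (d - Finsupp.single (1 : Fin 2) l) h
            = if (d - Finsupp.single (1 : Fin 2) l) 0 = 0 then
                coeff ((d - Finsupp.single (1 : Fin 2) l) + Finsupp.single 1 l) f
              else 0 := rfl
        rw [hrfl, if_pos hsub0]
      rw [this, tsub_add_cancel_of_le h2, one_mul, zero_add]
    · have h2 : ¬ Finsupp.single (1 : Fin 2) l ≤ d := by
        rw [Finsupp.single_le_iff]; exact hd1
      rw [if_neg h2]
      have hd : d = Finsupp.single (1 : Fin 2) (d 1) := by
        ext i
        fin_cases i
        · simpa [Finsupp.single_apply] using hd0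
        · simp [Finsupp.single_apply]
      rw [hd]
      rw [hf ⟨d 1, by omega⟩, add_zero]
  · have h1 : Finsupp.single (0 : Fin 2) 1 ≤ d := by
      rw [Finsupp.single_le_iff]; omega
    rw [if_pos h1, one_mul]
    have hgval : coeff (d - Finsupp.single (0 : Fin 2) 1) g
        = coeff d f := by
      show coeff ((d - Finsupp.single (0 : Fin 2) 1) + Finsupp.single 0 1) f = _
      rw [tsub_add_cancel_of_le h1]
    rw [hgval]
    by_cases h2 : Finsupp.single (1 : Fin 2) l ≤ d
    · rw [if_pos h2]
      have hsub0 : (d - Finsupp.single (1 : Fin 2) l) 0 ≠ 0 := by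
        rw [Finsupp.tsub_apply, Finsupp.single_apply]
        simpa using hd0
      have : coeff (d - Finsupp.single (1 : Fin 2) l) h = 0 := by
        have hrfl : coeff (d - Finsupp.single (1 : Fin 2) l) h
            = if (d - Finsupp.single (1 : Fin 2) l) 0 = 0 then
                coeff ((d - Finsupp.single (1 : Fin 2) l) + Finsupp.single 1 l) f
              else 0 := rfl
        rw [hrfl, if_neg hsub0]
      rw [this, mul_zero, add_zero]
    · rw [if_neg h2, add_zero]

/-- Let `l ≥ 1`. In `ℂ[[u,v]]`, let `I` be the ideal generated by `u − v^l` and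
`u + v^l`. Then `ℂ[[u,v]]/I` is a finite-dimensional `ℂ`-vector space of
dimension exactly `l`. -/
theorem local_intersection_multiplicity (l : ℕ) (hl : 1 ≤ l)
    (I : Ideal (MvPowerSeries (Fin 2) ℂ))
    (hI : I = Ideal.span {X 0 - X 1 ^ l, X 0 + X 1 ^ l}) :
    FiniteDimensional ℂ (MvPowerSeries (Fin 2) ℂ ⧸ I) ∧
      Module.finrank ℂ (MvPowerSeries (Fin 2) ℂ ⧸ I) = l := by
  classical
  -- Step 1: `I = (u, v^l)`.
  have h2 : (MvPowerSeries.C (σ := Fin 2) (R := ℂ)) (1/2) * 2 = 1 := by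
    rw [← map_ofNat (MvPowerSeries.C (σ := Fin 2) (R := ℂ)) 2, ← map_mul]
    norm_num
  have hI2 : I = Ideal.span ({X 0, X 1 ^ l} : Set (MvPowerSeries (Fin 2) ℂ)) := by
    rw [hI]
    apply le_antisymm
    · rw [Ideal.span_le]
      rintro x hx
      simp only [Set.mem_insert_iff, Set.mem_singleton_iff] at hx
      rcases hx with rfl | rfl
      · exact Ideal.mem_span_pair.2 ⟨1, -1, by ring⟩
      · exact Ideal.mem_span_pair.2 ⟨1, 1, by ring⟩
    · rw [Ideal.span_le]
      rintro x hx
      simp only [Set.mem_insert_iff, Set.mem_singleton_iff] at hx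
      rcases hx with rfl | rfl
      · exact Ideal.mem_span_pair.2
          ⟨MvPowerSeries.C (σ := Fin 2) (R := ℂ) (1/2), MvPowerSeries.C (σ := Fin 2) (R := ℂ) (1/2), by
            linear_combination (X 0 : MvPowerSeries (Fin 2) ℂ) * h2⟩
      · exact Ideal.mem_span_pair.2
          ⟨-(MvPowerSeries.C (σ := Fin 2) (R := ℂ) (1/2)), MvPowerSeries.C (σ := Fin 2) (R := ℂ) (1/2), by
            linear_combination ((X 1 : MvPowerSeries (Fin 2) ℂ) ^ l) * h2⟩
  -- Step 2: the coefficient map to `Fin l → ℂ`.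
  set T : MvPowerSeries (Fin 2) ℂ →ₗ[ℂ] (Fin l → ℂ) :=
    LinearMap.pi (fun j : Fin l => coeff (Finsupp.single 1 (j : ℕ))) with hT
  have hTI : ∀ f ∈ I, T f = 0 := by
    intro f hf
    rw [hI2, Ideal.mem_span_pair] at hf
    obtain ⟨a, b, rfl⟩ := hf
    funext j
    have hX0 : (X 0 : MvPowerSeries (Fin 2) ℂ) = monomial (Finsupp.single 0 1) 1 := by
      rw [← pow_one (X 0 : MvPowerSeries (Fin 2) ℂ), X_pow_eq]
    have hX1 : (X 1 : MvPowerSeries (Fin 2) ℂ) ^ l = monomial (Finsupp.single 1 l) 1 :=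
      X_pow_eq 1 l
    have h1 : ¬ Finsupp.single (0 : Fin 2) 1 ≤ Finsupp.single (1 : Fin 2) (j : ℕ) := by
      rw [Finsupp.single_le_iff, Finsupp.single_eq_of_ne (by decide : (0 : Fin 2) ≠ 1)]
      omega
    have h2 : ¬ Finsupp.single (1 : Fin 2) l ≤ Finsupp.single (1 : Fin 2) (j : ℕ) := by
      rw [Finsupp.single_le_iff, Finsupp.single_eq_same]
      exact Nat.not_le.mpr j.isLt
    show coeff (Finsupp.single 1 (j : ℕ)) (a * X 0 + b * X 1 ^ l) = 0
    rw [map_add, hX0, hX1, coeff_mul_monomial, coeff_mul_monomial, if_neg h1, if_neg h2,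
      add_zero]
  -- the quotient map as a `ℂ`-linear map
  set mkL : MvPowerSeries (Fin 2) ℂ →ₗ[ℂ] (MvPowerSeries (Fin 2) ℂ ⧸ I) :=
    (Ideal.Quotient.mkₐ ℂ I).toLinearMap with hmkL
  have hmk_surj : Function.Surjective mkL := fun x => Ideal.Quotient.mk_surjective x
  set K : Submodule ℂ (MvPowerSeries (Fin 2) ℂ) := LinearMap.ker mkL with hK
  have hKI : ∀ f, f ∈ K ↔ f ∈ I := by
    intro f
    rw [hK, LinearMap.mem_ker]
    exact Ideal.Quotient.eq_zero_iff_mem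
  have hKT : K ≤ LinearMap.ker T := fun f hf => LinearMap.mem_ker.2 (hTI f ((hKI f).1 hf))
  set T' : (MvPowerSeries (Fin 2) ℂ ⧸ K) →ₗ[ℂ] (Fin l → ℂ) := Submodule.liftQ K T hKT
    with hT'
  have hT'surj : Function.Surjective T' := by
    intro c
    refine ⟨Submodule.Quotient.mk (∑ j : Fin l, monomial (Finsupp.single 1 (j : ℕ)) (c j)),
      ?_⟩
    rw [hT', Submodule.liftQ_apply]
    funext i
    rw [hT, LinearMap.pi_apply, map_sum, Finset.sum_eq_single i]
    · rw [coeff_monomial_same]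
    · intro j _ hji
      rw [coeff_monomial, if_neg]
      intro hcon
      exact hji (Fin.ext (Finsupp.single_injective (1 : Fin 2) (hcon : Finsupp.single (1 : Fin 2) (i : ℕ) = Finsupp.single (1 : Fin 2) (j : ℕ)))).symm
    · simp
  have hT'inj : Function.Injective T' := by
    rw [← LinearMap.ker_eq_bot, hT']
    apply Submodule.ker_liftQ_eq_bot
    intro f hf
    rw [LinearMap.mem_ker, hT] at hf
    refine (hKI f).2 ?_
    rw [hI2]
    exact mem_span_of_coeff_eq_zero l f (fun j => congrFun hf j)
  have e : (MvPowerSeries (Fin 2) ℂ ⧸ I) ≃ₗ[ℂ] (Fin l → ℂ) :=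
    (LinearMap.quotKerEquivOfSurjective mkL hmk_surj).symm.trans
      (LinearEquiv.ofBijective T' ⟨hT'inj, hT'surj⟩)
  constructor
  · exact Module.Finite.equiv e.symm
  · rw [e.finrank_eq, Module.finrank_fin_fun]
end

section
/- Let s ≥ 1 be an integer, let F ∈ ℂ[x,y,z] be homogeneous of degree s and G ∈ ℂ[x,y,z] be homogeneous of degree 2s. Let P₁, …, P_r be finitely many points of ℂ³ ∖ {0} such that for each i one has F(Pᵢ) = 0 and the gradient (∂F/∂x, ∂F/∂y, ∂F/∂z) of F does not vanish at Pᵢ. Then there exists a polynomial H ∈ ℂ[x,y,z], homogeneous of degree s, such that for every i the gradient of G + F·H at Pᵢ is nonzero. -/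
open MvPolynomial

lemma exists_linear_nonvanishing (r : ℕ) (P : Fin r → (Fin 3 → ℂ))
    (hP0 : ∀ i, P i ≠ 0) :
    ∃ v : Fin 3 → ℂ, ∀ i, ∑ j, v j * P i j ≠ 0 := by
  -- consider the polynomial Q(v) = ∏ i, ∑ j, P i j * X j
  set Q : MvPolynomial (Fin 3) ℂ := ∏ i, ∑ j, C (P i j) * X j with hQ
  have hQne : Q ≠ 0 := by
    apply Finset.prod_ne_zero_iff.2
    intro i _
    intro h
    apply hP0 i
    funext j
    have := congrArg (coeff (Finsupp.single j 1)) h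
    simpa [coeff_sum, coeff_C_mul, coeff_X', Finsupp.single_left_inj] using this
  have : ¬ ∀ v : Fin 3 → ℂ, eval v Q = eval v 0 := by
    intro h
    exact hQne (MvPolynomial.funext h)
  push_neg at this
  obtain ⟨v, hv⟩ := this
  refine ⟨v, fun i hi => ?_⟩
  apply hv
  rw [map_zero, hQ, map_prod]
  apply Finset.prod_eq_zero (Finset.mem_univ i)
  simpa [mul_comm] using hi

/-- Let `F ∈ ℂ[x,y,z]` be homogeneous of degree `s`, `G` homogeneous of degree
`2s`, and `P₁, …, P_r` points of `ℂ³ ∖ {0}` with `F(Pᵢ) = 0` and `∇F(Pᵢ) ≠ 0`.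
Then there exists `H`, homogeneous of degree `s`, such that for every `i` the
gradient of `G + F·H` at `Pᵢ` is nonzero. -/
theorem exists_smooth_member (s : ℕ) (hs : 1 ≤ s)
    (F G : MvPolynomial (Fin 3) ℂ)
    (hF : F.IsHomogeneous s) (hG : G.IsHomogeneous (2 * s))
    (r : ℕ) (P : Fin r → (Fin 3 → ℂ))
    (hP0 : ∀ i, P i ≠ 0)
    (hPF : ∀ i, eval (P i) F = 0)
    (hgradF : ∀ i, ∃ j : Fin 3, eval (P i) (pderiv j F) ≠ 0) :
    ∃ H : MvPolynomial (Fin 3) ℂ, H.IsHomogeneous s ∧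
      ∀ i, ∃ j : Fin 3, eval (P i) (pderiv j (G + F * H)) ≠ 0 := by
  obtain ⟨v, hv⟩ := exists_linear_nonvanishing r P hP0
  set L : MvPolynomial (Fin 3) ℂ := ∑ j, C (v j) * X j with hL
  have hLhom : L.IsHomogeneous 1 := by
    apply IsHomogeneous.sum
    intro j _
    exact (isHomogeneous_X _ j).C_mul _
  set M : MvPolynomial (Fin 3) ℂ := L ^ s with hM
  have hMhom : M.IsHomogeneous s := by
    simpa using hLhom.pow s
  have hMne : ∀ i, eval (P i) M ≠ 0 := by
    intro i
    have : eval (P i) L ≠ 0 := by simpa [hL] using hv i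
    simpa [hM] using pow_ne_zero s this
  -- choose for each i an index j with nonzero gradient
  choose j hj using hgradF
  -- forbidden values
  set bad : Finset ℂ :=
    Finset.image (fun i => -(eval (P i) (pderiv (j i) G)) /
      (eval (P i) M * eval (P i) (pderiv (j i) F))) Finset.univ with hbad
  obtain ⟨c, hc⟩ := Infinite.exists_notMem_finset bad
  refine ⟨C c * M, hMhom.C_mul c, fun i => ?_⟩
  refine ⟨j i, ?_⟩
  have hder : eval (P i) (pderiv (j i) (G + F * (C c * M)))
      = eval (P i) (pderiv (j i) G)
        + eval (P i) (pderiv (j i) F) * (c * eval (P i) M) := by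
    rw [map_add, pderiv_mul, map_add]
    simp [hPF i, mul_comm, mul_left_comm]
  rw [hder]
  intro h
  apply hc
  rw [hbad]
  refine Finset.mem_image.2 ⟨i, Finset.mem_univ i, ?_⟩
  have hne : eval (P i) M * eval (P i) (pderiv (j i) F) ≠ 0 :=
    mul_ne_zero (hMne i) (hj i)
  rw [div_eq_iff hne]
  linear_combination (eval (P i) M * eval (P i) (pderiv (j i) F)) * 0 - h * 1
end
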